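/- For B < 0, set c = (1/√2)·arsinh(−2√2/B) and define ψ : [0,∞) → ℝ by ψ(ζ) = 2·log(tanh((ζ + c)/√2)) (well defined and negative since tanh of a positive argument lies in (0,1)). Then ψ is smooth on [0,∞) and satisfies ψ''(ζ) = exp(ψ(ζ)) − exp(−ψ(ζ)) for all ζ ≥ 0, ψ'(0) = −B, and ψ(ζ) → 0 and ψ'(ζ) → 0 as ζ → ∞. -/

import Mathlib

open Real Set Filter

/-- The paper's explicit Debye-layer solution for negative scaled wall charge
`B < 0`: `ψ(ζ) = 2 log(tanh((ζ + c)/√2))` with `c = (1/√2)·arsinh(-2√2/B)`. -/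
noncomputable def psiDneg (B ζ : ℝ) : ℝ :=
  2 * Real.log
    (Real.tanh ((ζ + (1 / Real.sqrt 2) * Real.arsinh (-(2 * Real.sqrt 2) / B)) / Real.sqrt 2))

lemma sqrt2_pos : (0:ℝ) < Real.sqrt 2 := by positivity
lemma sqrt2_mul_self : Real.sqrt 2 * Real.sqrt 2 = 2 := Real.mul_self_sqrt (by norm_num)

/-- first derivative -/
lemma aux_hasDerivAt (c ζ : ℝ) (h : 0 < ζ + c) :
    HasDerivAt (fun x => 2 * Real.log (Real.tanh ((x + c) / Real.sqrt 2)))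
      ((2 / Real.sqrt 2) *
        (Real.cosh ((ζ + c) / Real.sqrt 2) / Real.sinh ((ζ + c) / Real.sqrt 2) -
         Real.sinh ((ζ + c) / Real.sqrt 2) / Real.cosh ((ζ + c) / Real.sqrt 2))) ζ := by
  set s := Real.sqrt 2 with hsdef
  have hs := sqrt2_pos
  have hu : HasDerivAt (fun x : ℝ => (x + c) / s) (1 / s) ζ := by
    simpa using ((hasDerivAt_id ζ).add_const c).div_const s
  have hupos : 0 < (ζ + c) / s := div_pos h hs
  have hS : 0 < Real.sinh ((ζ + c) / s) := Real.sinh_pos_iff.mpr hupos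
  have hC : 0 < Real.cosh ((ζ + c) / s) := Real.cosh_pos _
  have hsinh : HasDerivAt (fun x : ℝ => Real.sinh ((x + c) / s))
      (Real.cosh ((ζ + c) / s) * (1 / s)) ζ := (Real.hasDerivAt_sinh _).comp ζ hu
  have hcosh : HasDerivAt (fun x : ℝ => Real.cosh ((x + c) / s))
      (Real.sinh ((ζ + c) / s) * (1 / s)) ζ := (Real.hasDerivAt_cosh _).comp ζ hu
  have hlogS : HasDerivAt (fun x : ℝ => Real.log (Real.sinh ((x + c) / s)))
      ((Real.sinh ((ζ + c) / s))⁻¹ * (Real.cosh ((ζ + c) / s) * (1 / s))) ζ :=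
    by have := (Real.hasDerivAt_log hS.ne').comp ζ hsinh; exact this
  have hlogC : HasDerivAt (fun x : ℝ => Real.log (Real.cosh ((x + c) / s)))
      ((Real.cosh ((ζ + c) / s))⁻¹ * (Real.sinh ((ζ + c) / s) * (1 / s))) ζ :=
    by have := (Real.hasDerivAt_log hC.ne').comp ζ hcosh; exact this
  have hphi : HasDerivAt
      (fun x : ℝ => 2 * (Real.log (Real.sinh ((x + c) / s)) - Real.log (Real.cosh ((x + c) / s))))
      ((2 / s) * (Real.cosh ((ζ + c) / s) / Real.sinh ((ζ + c) / s) -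
        Real.sinh ((ζ + c) / s) / Real.cosh ((ζ + c) / s))) ζ := by
    have := (hlogS.sub hlogC).const_mul 2
    refine this.congr_deriv ?_; symm
    field_simp
  apply hphi.congr_of_eventuallyEq
  filter_upwards [isOpen_Ioi.mem_nhds (show -c < ζ by linarith)] with x hx
  have hx' : 0 < (x + c) / s := div_pos (by simp only [Set.mem_Ioi] at hx; linarith) hs
  have hS' : 0 < Real.sinh ((x + c) / s) := Real.sinh_pos_iff.mpr hx'
  have hC' : 0 < Real.cosh ((x + c) / s) := Real.cosh_pos _
  rw [Real.tanh_eq_sinh_div_cosh, Real.log_div hS'.ne' hC'.ne']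

/-- second derivative -/
lemma aux_hasDerivAt2 (c ζ : ℝ) (h : 0 < ζ + c) :
    HasDerivAt (fun x => (2 / Real.sqrt 2) *
        (Real.cosh ((x + c) / Real.sqrt 2) / Real.sinh ((x + c) / Real.sqrt 2) -
         Real.sinh ((x + c) / Real.sqrt 2) / Real.cosh ((x + c) / Real.sqrt 2)))
      (Real.sinh ((ζ + c) / Real.sqrt 2) ^ 2 / Real.cosh ((ζ + c) / Real.sqrt 2) ^ 2 -
       Real.cosh ((ζ + c) / Real.sqrt 2) ^ 2 / Real.sinh ((ζ + c) / Real.sqrt 2) ^ 2) ζ := by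
  set s := Real.sqrt 2 with hsdef
  have hs := sqrt2_pos
  have hs2 := sqrt2_mul_self
  have hu : HasDerivAt (fun x : ℝ => (x + c) / s) (1 / s) ζ := by
    simpa using ((hasDerivAt_id ζ).add_const c).div_const s
  have hupos : 0 < (ζ + c) / s := div_pos h hs
  have hS : 0 < Real.sinh ((ζ + c) / s) := Real.sinh_pos_iff.mpr hupos
  have hC : 0 < Real.cosh ((ζ + c) / s) := Real.cosh_pos _
  have hsinh : HasDerivAt (fun x : ℝ => Real.sinh ((x + c) / s))
      (Real.cosh ((ζ + c) / s) * (1 / s)) ζ := (Real.hasDerivAt_sinh _).comp ζ hu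
  have hcosh : HasDerivAt (fun x : ℝ => Real.cosh ((x + c) / s))
      (Real.sinh ((ζ + c) / s) * (1 / s)) ζ := (Real.hasDerivAt_cosh _).comp ζ hu
  have h1 := hcosh.div hsinh hS.ne'
  have h2 := hsinh.div hcosh hC.ne'
  have h3 := (h1.sub h2).const_mul (2 / s)
  refine h3.congr_deriv ?_; symm
  have hsq : Real.cosh ((ζ + c) / s) ^ 2 = Real.sinh ((ζ + c) / s) ^ 2 + 1 := Real.cosh_sq _
  have hs' : s ≠ 0 := hs.ne'
  field_simp
  linear_combination (Real.sinh ((ζ + c) / s) ^ 4 - Real.cosh ((ζ + c) / s) ^ 4) * hs2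

lemma aux_exp_eq (c ζ : ℝ) (h : 0 < ζ + c) :
    Real.exp (2 * Real.log (Real.tanh ((ζ + c) / Real.sqrt 2))) -
      Real.exp (-(2 * Real.log (Real.tanh ((ζ + c) / Real.sqrt 2)))) =
    Real.sinh ((ζ + c) / Real.sqrt 2) ^ 2 / Real.cosh ((ζ + c) / Real.sqrt 2) ^ 2 -
      Real.cosh ((ζ + c) / Real.sqrt 2) ^ 2 / Real.sinh ((ζ + c) / Real.sqrt 2) ^ 2 := by
  have hs := sqrt2_pos
  have hupos : 0 < (ζ + c) / Real.sqrt 2 := div_pos h hs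
  have hS : 0 < Real.sinh ((ζ + c) / Real.sqrt 2) := Real.sinh_pos_iff.mpr hupos
  have hC : 0 < Real.cosh ((ζ + c) / Real.sqrt 2) := Real.cosh_pos _
  have ht : 0 < Real.tanh ((ζ + c) / Real.sqrt 2) := by
    rw [Real.tanh_eq_sinh_div_cosh]; exact div_pos hS hC
  have h2 : (2:ℝ) * Real.log (Real.tanh ((ζ + c) / Real.sqrt 2)) =
      Real.log (Real.tanh ((ζ + c) / Real.sqrt 2) ^ 2) := by
    rw [Real.log_pow]; push_cast; ring
  rw [h2, Real.exp_log (by positivity), ← Real.log_inv, Real.exp_log (by positivity),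
    Real.tanh_eq_sinh_div_cosh, div_pow, inv_div]

lemma tanh_tendsto_one : Tendsto Real.tanh atTop (nhds 1) := by
  have key : ∀ x : ℝ, Real.tanh x =
      (1 - Real.exp (-(2 * x))) / (1 + Real.exp (-(2 * x))) := by
    intro x
    have hden : 0 < 1 + Real.exp (-(2 * x)) := by positivity
    have hexp : Real.exp (-(2 * x)) = Real.exp (-x) / Real.exp x := by
      rw [← Real.exp_sub]; ring_nf
    rw [Real.tanh_eq_sinh_div_cosh, Real.sinh_eq, Real.cosh_eq, hexp]
    have h1 : (0:ℝ) < Real.exp x + Real.exp (-x) := by positivity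
    field_simp
  have hexp0 : Tendsto (fun x : ℝ => Real.exp (-(2 * x))) atTop (nhds 0) := by
    apply Real.tendsto_exp_atBot.comp
    apply tendsto_neg_atTop_atBot.comp
    exact (tendsto_id (α := ℝ)).const_mul_atTop two_pos
  have := ((tendsto_const_nhds (x := (1:ℝ))).sub hexp0).div
    ((tendsto_const_nhds (x := (1:ℝ))).add hexp0) (by norm_num : (1:ℝ) + 0 ≠ 0)
  simp only [sub_zero, add_zero, div_one] at this
  exact Tendsto.congr (fun x => (key x).symm) this


/-- For `B < 0` the Debye-layer profile `ψ(ζ) = 2 log(tanh((ζ+c)/√2))` is smooth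
on `[0,∞)` and solves `ψ'' = e^ψ - e^{-ψ}` with `ψ'(0) = -B`, `ψ(ζ) → 0` and
`ψ'(ζ) → 0` as `ζ → ∞`. -/
theorem stmt_7 (B : ℝ) (hB : B < 0) :
    ContDiffOn ℝ (⊤ : ℕ∞) (psiDneg B) (Set.Ici 0) ∧
    (∀ ζ ∈ Set.Ici (0:ℝ),
      deriv (deriv (psiDneg B)) ζ =
        Real.exp (psiDneg B ζ) - Real.exp (-psiDneg B ζ)) ∧
    deriv (psiDneg B) 0 = -B ∧
    Tendsto (psiDneg B) atTop (nhds 0) ∧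
    Tendsto (deriv (psiDneg B)) atTop (nhds 0) := by
  have hs := sqrt2_pos
  have hs2 := sqrt2_mul_self
  set c : ℝ := (1 / Real.sqrt 2) * Real.arsinh (-(2 * Real.sqrt 2) / B) with hcdef
  have hpsi : psiDneg B = fun ζ => 2 * Real.log (Real.tanh ((ζ + c) / Real.sqrt 2)) := rfl
  have ht0 : 0 < -(2 * Real.sqrt 2) / B := div_pos_of_neg_of_neg (by nlinarith) hB
  have hc : 0 < c := mul_pos (by positivity) (Real.arsinh_pos_iff.mpr ht0)
  -- the first-derivative function
  set g : ℝ → ℝ := fun x => (2 / Real.sqrt 2) *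
      (Real.cosh ((x + c) / Real.sqrt 2) / Real.sinh ((x + c) / Real.sqrt 2) -
       Real.sinh ((x + c) / Real.sqrt 2) / Real.cosh ((x + c) / Real.sqrt 2)) with hgdef
  have hderiv : ∀ x : ℝ, -c < x → deriv (psiDneg B) x = g x := by
    intro x hx
    rw [hpsi]
    exact (aux_hasDerivAt c x (by linarith)).deriv
  refine ⟨?_, ?_, ?_, ?_, ?_⟩
  · -- smoothness
    intro ζ hζ
    have hζ0 : (0:ℝ) ≤ ζ := hζ
    have hupos : 0 < (ζ + c) / Real.sqrt 2 := div_pos (by linarith) hs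
    have hS : 0 < Real.sinh ((ζ + c) / Real.sqrt 2) := Real.sinh_pos_iff.mpr hupos
    have hC : 0 < Real.cosh ((ζ + c) / Real.sqrt 2) := Real.cosh_pos _
    have htanh : ContDiffAt ℝ (⊤ : ℕ∞) (fun x : ℝ => Real.tanh ((x + c) / Real.sqrt 2)) ζ := by
      have heq : (fun x : ℝ => Real.tanh ((x + c) / Real.sqrt 2)) =
          fun x : ℝ => Real.sinh ((x + c) / Real.sqrt 2) / Real.cosh ((x + c) / Real.sqrt 2) :=
        funext fun x => Real.tanh_eq_sinh_div_cosh _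
      rw [heq]
      have haff : ContDiff ℝ (⊤ : ℕ∞) (fun x : ℝ => (x + c) / Real.sqrt 2) :=
        (contDiff_id.add contDiff_const).div_const _
      exact ((Real.contDiff_sinh.comp haff).contDiffAt).div
        ((Real.contDiff_cosh.comp haff).contDiffAt) (Real.cosh_pos _).ne'
    have ht : Real.tanh ((ζ + c) / Real.sqrt 2) ≠ 0 := by
      rw [Real.tanh_eq_sinh_div_cosh]; exact (div_pos hS hC).ne'
    rw [hpsi]
    exact (contDiffAt_const.mul (htanh.log ht)).contDiffWithinAt
  · -- the ODE
    intro ζ hζ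
    have hζ0 : (0:ℝ) ≤ ζ := hζ
    have hev : deriv (psiDneg B) =ᶠ[nhds ζ] g := by
      filter_upwards [isOpen_Ioi.mem_nhds (show -c < ζ by linarith)] with x hx
      exact hderiv x hx
    rw [hev.deriv_eq, hgdef, (aux_hasDerivAt2 c ζ (by linarith)).deriv, hpsi]
    exact (aux_exp_eq c ζ (by linarith)).symm
  · -- ψ'(0) = -B
    rw [hderiv 0 (by linarith)]
    simp only [hgdef, zero_add]
    have hBne : B ≠ 0 := hB.ne
    have harg : 2 * (c / Real.sqrt 2) = Real.arsinh (-(2 * Real.sqrt 2) / B) := by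
      rw [hcdef]
      field_simp
      rw [Real.sq_sqrt (by norm_num : (0:ℝ) ≤ 2)]
    have hsinh2 : Real.sinh (2 * (c / Real.sqrt 2)) = -(2 * Real.sqrt 2) / B := by
      rw [harg, Real.sinh_arsinh]
    have hSC' : Real.sinh (c / Real.sqrt 2) * Real.cosh (c / Real.sqrt 2) * B =
        -Real.sqrt 2 := by
      have h := (Real.sinh_two_mul (c / Real.sqrt 2)).symm.trans hsinh2
      have h2 : 2 * Real.sinh (c / Real.sqrt 2) * Real.cosh (c / Real.sqrt 2) * B =
          -(2 * Real.sqrt 2) := by rw [h, div_mul_cancel₀ _ hBne]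
      linear_combination h2 / 2
    have hupos : 0 < c / Real.sqrt 2 := div_pos hc hs
    have hS : 0 < Real.sinh (c / Real.sqrt 2) := Real.sinh_pos_iff.mpr hupos
    have hC : 0 < Real.cosh (c / Real.sqrt 2) := Real.cosh_pos _
    have hsq : Real.cosh (c / Real.sqrt 2) ^ 2 - Real.sinh (c / Real.sqrt 2) ^ 2 = 1 :=
      Real.cosh_sq_sub_sinh_sq _
    field_simp
    linear_combination Real.sqrt 2 * hSC' + 2 * hsq - hs2
  · -- ψ → 0
    rw [hpsi]
    have huT : Tendsto (fun x : ℝ => (x + c) / Real.sqrt 2) atTop atTop :=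
      (tendsto_atTop_add_const_right _ c tendsto_id).atTop_div_const hs
    have htanhT : Tendsto (fun x : ℝ => Real.tanh ((x + c) / Real.sqrt 2)) atTop (nhds 1) :=
      tanh_tendsto_one.comp huT
    have hcont : ContinuousAt (fun t : ℝ => 2 * Real.log t) 1 :=
      continuousAt_const.mul (Real.continuousAt_log one_ne_zero)
    have := hcont.tendsto.comp htanhT
    simpa [Function.comp_def] using this
  · -- ψ' → 0
    have huT : Tendsto (fun x : ℝ => (x + c) / Real.sqrt 2) atTop atTop :=
      (tendsto_atTop_add_const_right _ c tendsto_id).atTop_div_const hs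
    have htanhT : Tendsto (fun x : ℝ => Real.tanh ((x + c) / Real.sqrt 2)) atTop (nhds 1) :=
      tanh_tendsto_one.comp huT
    have hgeq : ∀ x : ℝ, g x = (2 / Real.sqrt 2) *
        ((Real.tanh ((x + c) / Real.sqrt 2))⁻¹ - Real.tanh ((x + c) / Real.sqrt 2)) := by
      intro x
      rw [hgdef]
      simp only [Real.tanh_eq_sinh_div_cosh, inv_div]
    have hcont : ContinuousAt (fun t : ℝ => (2 / Real.sqrt 2) * (t⁻¹ - t)) 1 :=
      continuousAt_const.mul ((continuousAt_inv₀ one_ne_zero).sub continuousAt_id)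
    have hgT : Tendsto g atTop (nhds 0) := by
      have := hcont.tendsto.comp htanhT
      simp only [Function.comp_def] at this ⊢
      have h0 : (2 / Real.sqrt 2) * ((1:ℝ)⁻¹ - 1) = 0 := by norm_num
      rw [h0] at this
      exact Tendsto.congr (fun x => (hgeq x).symm) this
    refine hgT.congr' ?_
    filter_upwards [Ioi_mem_atTop (-c)] with x hx
    exact (hderiv x hx).symm
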